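/- arXiv:0807.4450 — 5 statements merged into one kernel-verified Lean document; each statement's English description precedes it below -/
import Mathlib

section
/- Call a vertex v abundant in configuration a if a(v) ≥ 2·deg(v). In the candy-passing game on a finite graph G, the total number of candies held by abundant vertices is nonincreasing from one round to the next. -/
/-! A vertex receives at most one candy per neighbor, so a vertex that fires cannot gain,
and a vertex that does not fire ends the round with fewer than `2 * deg v` candies.
Hence every vertex abundant after the round was abundant before it and has not gained. -/

open Finset

/-- One round of the candy-passing game: each vertex holding at least its degree
passes one candy to each neighbor. -/
def candyRound {V : Type*} [Fintype V] [DecidableEq V]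
    (G : SimpleGraph V) [DecidableRel G.Adj] (a : V → ℕ) : V → ℕ :=
  fun v => (if G.degree v ≤ a v then a v - G.degree v else a v) +
    ((G.neighborFinset v).filter fun u => G.degree u ≤ a u).card

namespace SimpleGraph

variable {V : Type*} [Fintype V] (G : SimpleGraph V) [DecidableRel G.Adj]

theorem card_filter_neighborFinset_le_degree (p : V → Prop) [DecidablePred p] (v : V) :
    ((G.neighborFinset v).filter p).card ≤ G.degree v :=
  G.card_neighborFinset_eq_degree v ▸ card_filter_le _ _

variable [DecidableEq V] (a : V → ℕ) {v : V}

theorem candyRound_le_of_degree_le (h : G.degree v ≤ a v) : candyRound G a v ≤ a v := by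
  have := G.card_filter_neighborFinset_le_degree (fun u => G.degree u ≤ a u) v
  simp only [candyRound, if_pos h]
  omega

theorem candyRound_lt_of_lt_degree (h : a v < G.degree v) :
    candyRound G a v < 2 * G.degree v := by
  have := G.card_filter_neighborFinset_le_degree (fun u => G.degree u ≤ a u) v
  simp only [candyRound, if_neg h.not_ge]
  omega

theorem candyRound_le_of_two_mul_degree_le_candyRound
    (h : 2 * G.degree v ≤ candyRound G a v) : candyRound G a v ≤ a v := by
  by_cases hfire : G.degree v ≤ a v
  · exact G.candyRound_le_of_degree_le a hfire
  · exact absurd h (G.candyRound_lt_of_lt_degree a (not_le.mp hfire)).not_ge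

end SimpleGraph

theorem abundant_total_nonincreasing {V : Type*} [Fintype V] [DecidableEq V]
    (G : SimpleGraph V) [DecidableRel G.Adj] (a : V → ℕ) :
    ∑ v ∈ Finset.univ.filter (fun v => 2 * G.degree v ≤ candyRound G a v),
      candyRound G a v ≤
    ∑ v ∈ Finset.univ.filter (fun v => 2 * G.degree v ≤ a v), a v := by
  have not_gained : ∀ v, 2 * G.degree v ≤ candyRound G a v → candyRound G a v ≤ a v :=
    fun v => G.candyRound_le_of_two_mul_degree_le_candyRound a
  calc ∑ v ∈ univ.filter (fun v => 2 * G.degree v ≤ candyRound G a v), candyRound G a v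
      ≤ ∑ v ∈ univ.filter (fun v => 2 * G.degree v ≤ candyRound G a v), a v :=
        sum_le_sum fun v hv => not_gained v (mem_filter.mp hv).2
    _ ≤ ∑ v ∈ univ.filter (fun v => 2 * G.degree v ≤ a v), a v :=
        sum_le_sum_of_subset <| monotone_filter_right _ fun v _ hv =>
          hv.trans (not_gained v hv)
end

section
/- In the candy-passing game on a finite graph G, if an abundant vertex v (one with a(v) ≥ 2·deg(v)) holds strictly fewer candies after a round than before, then the total amount of candy on abundant vertices strictly decreases during that round. -/
/-
A vertex that is abundant after the round must have fired (a vertex that keeps its candies gains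
fewer than its degree, so it stays below twice its degree), hence it was abundant before and gained
at most its degree after paying it out. So every abundant vertex of the new configuration was
abundant in the old one with at least as many candies, while `v` strictly loses: it either stays
abundant with fewer candies or drops out with a positive amount.
-/

open Finset

theorem Finset.sum_filter_lt_sum_filter {ι M : Type*} [AddCommMonoid M] [PartialOrder M]
    [IsOrderedCancelAddMonoid M] [CanonicallyOrderedAdd M] {s : Finset ι} {p q : ι → Prop}
    [DecidablePred p] [DecidablePred q] {f g : ι → M} (hqp : ∀ i ∈ s, q i → p i)
    (hfg : ∀ i ∈ s, q i → f i ≤ g i) {j : ι} (hj : j ∈ s) (hpj : p j) (hfgj : f j < g j) :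
    ∑ i ∈ s with q i, f i < ∑ i ∈ s with p i, g i := by
  have hq : s.filter q = (s.filter p).filter q := by
    rw [filter_filter]
    exact filter_congr fun i hi => ⟨fun hqi => ⟨hqp i hi hqi, hqi⟩, And.right⟩
  rw [hq, sum_filter]
  refine sum_lt_sum (fun i hi => ?_) ⟨j, mem_filter.2 ⟨hj, hpj⟩, ?_⟩
  · split_ifs with hqi
    · exact hfg i (mem_filter.1 hi).1 hqi
    · exact zero_le
  · split_ifs
    · exact hfgj
    · exact zero_le.trans_lt hfgj

theorem SimpleGraph.card_filter_neighborFinset_le_degree_s4 {V : Type*} [Fintype V]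
    (G : SimpleGraph V) [DecidableRel G.Adj] (p : V → Prop) [DecidablePred p] (u : V) :
    ((G.neighborFinset u).filter p).card ≤ G.degree u :=
  (card_filter_le _ _).trans_eq (G.card_neighborFinset_eq_degree u)

section CandyRound

variable {V : Type*} [Fintype V] [DecidableEq V] (G : SimpleGraph V) [DecidableRel G.Adj]
  (a : V → ℕ) {u : V}

theorem candyRound_le_of_degree_le (h : G.degree u ≤ a u) : candyRound G a u ≤ a u := by
  have := G.card_filter_neighborFinset_le_degree_s4 (fun w => G.degree w ≤ a w) u
  simp only [candyRound, if_pos h]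
  omega

theorem candyRound_lt_two_mul_degree_of_lt_degree (h : a u < G.degree u) :
    candyRound G a u < 2 * G.degree u := by
  have := G.card_filter_neighborFinset_le_degree_s4 (fun w => G.degree w ≤ a w) u
  simp only [candyRound, if_neg (not_le.2 h)]
  omega

theorem degree_le_of_two_mul_degree_le_candyRound (h : 2 * G.degree u ≤ candyRound G a u) :
    G.degree u ≤ a u :=
  not_lt.1 fun hlt => (candyRound_lt_two_mul_degree_of_lt_degree G a hlt).not_ge h

theorem candyRound_le_of_two_mul_degree_le_candyRound (h : 2 * G.degree u ≤ candyRound G a u) :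
    candyRound G a u ≤ a u :=
  candyRound_le_of_degree_le G a (degree_le_of_two_mul_degree_le_candyRound G a h)

end CandyRound

theorem abundant_loss_decreases_total {V : Type*} [Fintype V] [DecidableEq V]
    (G : SimpleGraph V) [DecidableRel G.Adj] (a : V → ℕ) (v : V)
    (hv : 2 * G.degree v ≤ a v) (hloss : candyRound G a v < a v) :
    ∑ u ∈ Finset.univ.filter (fun u => 2 * G.degree u ≤ candyRound G a u),
      candyRound G a u <
    ∑ u ∈ Finset.univ.filter (fun u => 2 * G.degree u ≤ a u), a u :=
  sum_filter_lt_sum_filter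
    (fun _ _ h => h.trans (candyRound_le_of_two_mul_degree_le_candyRound G a h))
    (fun _ _ h => candyRound_le_of_two_mul_degree_le_candyRound G a h) (mem_univ v) hv hloss
end

section
/- If a candy configuration a on a finite graph G has total candy exactly 4|E(G)| − |V(G)| and no vertex is abundant (each vertex v has a(v) < 2·deg(v)), then every vertex v holds exactly 2·deg(v) − 1 candies; moreover such a configuration is a fixed point of the candy-passing round (assuming every vertex has degree at least 1). -/
/-!
By the handshake lemma, the bounds `a v ≤ 2 deg v - 1` add up to exactly `4|E| - |V|`, so a
total of `4|E| - |V|` forces equality at every vertex. Then every vertex holds at least its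
degree, so each one passes `deg v` candies and receives one from each of its `deg v`
neighbours.
-/

open Finset

theorem SimpleGraph.sum_two_mul_degree_sub_one {V : Type*} [Fintype V] (G : SimpleGraph V)
    [DecidableRel G.Adj] (hdeg : ∀ v, 1 ≤ G.degree v) :
    ∑ v, (2 * G.degree v - 1) = 4 * #G.edgeFinset - Fintype.card V := by
  rw [sum_tsub_distrib univ fun v _ => by have := hdeg v; omega, ← mul_sum,
    sum_degrees_eq_twice_card_edges]
  simp only [sum_const, card_univ, smul_eq_mul, mul_one]
  omega

theorem candyRound_eq_self_of_forall_degree_le {V : Type*} [Fintype V] [DecidableEq V]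
    (G : SimpleGraph V) [DecidableRel G.Adj] {a : V → ℕ} (h : ∀ v, G.degree v ≤ a v) :
    candyRound G a = a := by
  funext v
  have hfire : (G.neighborFinset v).filter (fun u => G.degree u ≤ a u) = G.neighborFinset v :=
    filter_true_of_mem fun u _ => h u
  simp only [candyRound, if_pos (h v), hfire, SimpleGraph.card_neighborFinset_eq_degree]
  exact Nat.sub_add_cancel (h v)

theorem no_abundant_forces_fixed_general {V : Type*} [Fintype V] [DecidableEq V]
    (G : SimpleGraph V) [DecidableRel G.Adj] (a : V → ℕ)
    (htot : ∑ v, a v = 4 * G.edgeFinset.card - Fintype.card V)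
    (hna : ∀ v : V, a v < 2 * G.degree v) :
    (∀ v : V, a v = 2 * G.degree v - 1) ∧ candyRound G a = a := by
  have hdeg : ∀ v, 1 ≤ G.degree v := fun v => by have := hna v; omega
  have hle : ∀ v ∈ univ, a v ≤ 2 * G.degree v - 1 := fun v _ => by have := hna v; omega
  have heq : ∀ v, a v = 2 * G.degree v - 1 := fun v =>
    (sum_eq_sum_iff_of_le hle).mp (by rw [htot, G.sum_two_mul_degree_sub_one hdeg]) v (mem_univ v)
  refine ⟨heq, candyRound_eq_self_of_forall_degree_le G fun v => ?_⟩
  have := heq v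
  have := hdeg v
  omega

theorem no_abundant_forces_fixed {V : Type*} [Fintype V] [DecidableEq V]
    (G : SimpleGraph V) [DecidableRel G.Adj] (a : V → ℕ)
    (hdeg : ∀ v : V, 1 ≤ G.degree v)
    (htot : ∑ v, a v = 4 * G.edgeFinset.card - Fintype.card V)
    (hna : ∀ v : V, a v < 2 * G.degree v) :
    (∀ v : V, a v = 2 * G.degree v - 1) ∧ candyRound G a = a :=
  no_abundant_forces_fixed_general G a htot hna
end

section
/- Suppose in the candy-passing game on a finite graph G a vertex w has stabilized with at least 2·deg(w) candies from round N onwards (i.e., a_n(w) = a_N(w) ≥ 2·deg(w) for all n ≥ N, with deg(w) ≥ 1). Then every neighbor v of w must hold at least deg(v) candies at every round n ≥ N, i.e., it passes candy in every such round. -/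
/- A vertex holding at least `2 deg w` candies passes in every round, so it keeps its count only
if it receives `deg w` candies back, i.e. only if every neighbor passes too. -/

open Finset

namespace SimpleGraph

variable {V : Type*} [Fintype V] [DecidableEq V] (G : SimpleGraph V) [DecidableRel G.Adj]

theorem candyRound_of_degree_le {a : V → ℕ} {v : V} (hv : G.degree v ≤ a v) :
    candyRound G a v =
      a v - G.degree v + ((G.neighborFinset v).filter fun u => G.degree u ≤ a u).card := by
  simp only [candyRound, if_pos hv]

theorem candyRound_eq_self_iff_of_degree_le {a : V → ℕ} {v : V} (hv : G.degree v ≤ a v) :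
    candyRound G a v = a v ↔ ∀ u, G.Adj v u → G.degree u ≤ a u := by
  rw [G.candyRound_of_degree_le hv]
  have hcard : ((G.neighborFinset v).filter fun u => G.degree u ≤ a u).card = G.degree v ↔
      ∀ u, G.Adj v u → G.degree u ≤ a u := by
    rw [← card_neighborFinset_eq_degree, card_filter_eq_iff]
    simp only [mem_neighborFinset]
  rw [← hcard]
  omega

end SimpleGraph

theorem neighbors_of_stable_abundant_pass_general {V : Type*} [Fintype V] [DecidableEq V]
    (G : SimpleGraph V) [DecidableRel G.Adj] (a₀ : V → ℕ) (w : V) (N : ℕ)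
    (habund : 2 * G.degree w ≤ (candyRound G)^[N] a₀ w)
    (hstab : ∀ n ≥ N, (candyRound G)^[n] a₀ w = (candyRound G)^[N] a₀ w) :
    ∀ v : V, G.Adj w v → ∀ n ≥ N,
      G.degree v ≤ (candyRound G)^[n] a₀ v := by
  intro v hadj n hn
  have hfixed : candyRound G ((candyRound G)^[n] a₀) w = (candyRound G)^[n] a₀ w := by
    rw [← Function.iterate_succ_apply' (candyRound G), hstab (n + 1) (by omega), hstab n hn]
  have hpasses : G.degree w ≤ (candyRound G)^[n] a₀ w := by
    rw [hstab n hn]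
    omega
  exact (G.candyRound_eq_self_iff_of_degree_le hpasses).1 hfixed v hadj

theorem neighbors_of_stable_abundant_pass {V : Type*} [Fintype V] [DecidableEq V]
    (G : SimpleGraph V) [DecidableRel G.Adj] (a₀ : V → ℕ) (w : V) (N : ℕ)
    (hdeg : 1 ≤ G.degree w)
    (habund : 2 * G.degree w ≤ (candyRound G)^[N] a₀ w)
    (hstab : ∀ n ≥ N, (candyRound G)^[n] a₀ w = (candyRound G)^[N] a₀ w) :
    ∀ v : V, G.Adj w v → ∀ n ≥ N,
      G.degree v ≤ (candyRound G)^[n] a₀ v :=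
  neighbors_of_stable_abundant_pass_general G a₀ w N habund hstab
end

section
/- Let G be a finite connected k-regular simple graph with k ≥ 1. Any candy-passing game on G with at least (2k−1)·|V(G)| candies eventually reaches a fixed configuration. -/
open Finset

/-! The number of candies is invariant and no pile ever exceeds `max (max a₀) (2k - 1)`, so the
orbit is eventually periodic, and it suffices to show that a periodic configuration `b` with at
least `(2k - 1)|V|` candies is fixed.

A vertex that fires in every round of the period loses `k` and gains at most `k` per round, so
its pile is non-increasing, hence constant, and all its neighbours must fire in every round too;
by connectivity every vertex then always fires, so `b` is fixed. Such a vertex exists: if the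
largest pile `M` seen during the period is at least `2k`, a vertex holding `M` already held `M`
a round earlier (a vertex that does not fire ends the round with fewer than `2k`), so by
periodicity it holds `M ≥ k` forever. Otherwise all piles of `b` are at most `2k - 1`, and the
candy count forces them all to equal `2k - 1 ≥ k`. -/

open Function

theorem SimpleGraph.Connected.forall_of_forall_adj {V : Type*} {G : SimpleGraph V}
    (hconn : G.Connected) {P : V → Prop} (hstep : ∀ v w, G.Adj v w → P v → P w) {v : V}
    (hv : P v) (w : V) : P w := by
  obtain ⟨W⟩ := hconn.preconnected v w
  induction W with
  | nil => exact hv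
  | cons h _ ih => exact ih (hstep _ _ h hv)

theorem SimpleGraph.sum_sum_neighborFinset {V M : Type*} [Fintype V] [AddCommMonoid M]
    (G : SimpleGraph V) [DecidableRel G.Adj] (g : V → M) :
    ∑ v, ∑ u ∈ G.neighborFinset v, g u = ∑ u, G.degree u • g u := by
  simp only [SimpleGraph.neighborFinset_eq_filter, sum_filter]
  rw [sum_comm]
  refine sum_congr rfl fun u _ => ?_
  rw [← sum_filter, Finset.sum_const, ← G.card_neighborFinset_eq_degree,
    SimpleGraph.neighborFinset_eq_filter]
  simp only [G.adj_comm]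

theorem SimpleGraph.IsRegularOfDegree.card_filter_neighborFinset_le {V : Type*} [Fintype V]
    {G : SimpleGraph V} [DecidableRel G.Adj] {k : ℕ} (hreg : G.IsRegularOfDegree k)
    (P : V → Prop) [DecidablePred P] (v : V) : #{u ∈ G.neighborFinset v | P u} ≤ k :=
  (card_filter_le _ _).trans (by rw [G.card_neighborFinset_eq_degree, hreg v])

theorem Function.Periodic.eq_succ_of_antitone {α : Type*} [PartialOrder α] {x : ℕ → α}
    {p : ℕ} (hx : Periodic x p) (hp : 0 < p) (hanti : Antitone x) (t : ℕ) : x (t + 1) = x t :=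
  le_antisymm (hanti t.le_succ) ((hx t).symm.le.trans (hanti (by omega)))

theorem Function.Periodic.forall_eq_of_succ_eq {α : Type*} {x : ℕ → α} {p : ℕ}
    (hx : Periodic x p) (hp : 0 < p) {c : α} (hstep : ∀ t, x (t + 1) = c → x t = c)
    {t₀ : ℕ} (ht₀ : x t₀ = c) (t : ℕ) : x t = c := by
  have descend : ∀ d s, x (s + d) = c → x s = c := by
    intro d
    induction d with
    | zero => exact fun s h => h
    | succ d ih => exact fun s h => hstep s (ih (s + 1) (by rwa [add_right_comm]))
  refine descend (t₀ + t * p - t) t ?_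
  rw [Nat.add_sub_cancel' (by nlinarith), ← ht₀]
  exact_mod_cast hx.nat_mul t t₀

section Regular

variable {V : Type*} [Fintype V] [DecidableEq V] {G : SimpleGraph V} [DecidableRel G.Adj]
  {k : ℕ}

theorem candyRound_apply (hreg : G.IsRegularOfDegree k) (a : V → ℕ) (v : V) :
    candyRound G a v =
      (if k ≤ a v then a v - k else a v) + #{u ∈ G.neighborFinset v | k ≤ a u} := by
  simp only [candyRound, hreg v, hreg _]

theorem candyRound_add_of_le (hreg : G.IsRegularOfDegree k) {a : V → ℕ} {v : V}
    (h : k ≤ a v) :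
    candyRound G a v + k = a v + #{u ∈ G.neighborFinset v | k ≤ a u} := by
  rw [candyRound_apply hreg, if_pos h]
  omega

theorem candyRound_of_lt (hreg : G.IsRegularOfDegree k) {a : V → ℕ} {v : V} (h : a v < k) :
    candyRound G a v = a v + #{u ∈ G.neighborFinset v | k ≤ a u} := by
  rw [candyRound_apply hreg, if_neg h.not_ge]

theorem sum_candyRound (hreg : G.IsRegularOfDegree k) (a : V → ℕ) :
    ∑ v, candyRound G a v = ∑ v, a v := by
  have step : ∀ v, candyRound G a v + k * (if k ≤ a v then 1 else 0) =
      a v + ∑ u ∈ G.neighborFinset v, if k ≤ a u then 1 else 0 := by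
    intro v
    rw [← card_filter]
    rcases le_or_gt k (a v) with h | h
    · rw [if_pos h, mul_one, candyRound_add_of_le hreg h]
    · rw [if_neg h.not_ge, mul_zero, add_zero, candyRound_of_lt hreg h]
  have total := sum_congr rfl fun v (_ : v ∈ univ) => step v
  simp only [sum_add_distrib, G.sum_sum_neighborFinset, hreg _, smul_eq_mul] at total
  omega

theorem sum_iterate_candyRound (hreg : G.IsRegularOfDegree k) (a : V → ℕ) (n : ℕ) :
    ∑ v, (candyRound G)^[n] a v = ∑ v, a v := by
  induction n with
  | zero => rfl
  | succ n ih => rw [iterate_succ_apply', sum_candyRound hreg, ih]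

theorem candyRound_le (hreg : G.IsRegularOfDegree k) {B : ℕ} (hB : 2 * k - 1 ≤ B)
    {a : V → ℕ} (ha : ∀ v, a v ≤ B) (v : V) : candyRound G a v ≤ B := by
  have hfiring := hreg.card_filter_neighborFinset_le (k ≤ a ·) v
  have hav := ha v
  rw [candyRound_apply hreg]
  split <;> omega

theorem iterate_candyRound_apply_le (hreg : G.IsRegularOfDegree k) (a : V → ℕ) (n : ℕ)
    (v : V) :
    (candyRound G)^[n] a v ≤ max (univ.sup a) (2 * k - 1) := by
  induction n generalizing v with
  | zero => exact le_max_of_le_left (le_sup (mem_univ v))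
  | succ n ih =>
    rw [iterate_succ_apply']
    exact candyRound_le hreg (le_max_right _ _) ih v

theorem candyRound_eq_self (hreg : G.IsRegularOfDegree k) {a : V → ℕ} (h : ∀ v, k ≤ a v) :
    candyRound G a = a := by
  funext v
  have hstep := candyRound_add_of_le hreg (h v)
  rw [filter_true_of_mem fun u _ => h u, G.card_neighborFinset_eq_degree, hreg v] at hstep
  omega

theorem eq_of_candyRound_apply_eq (hreg : G.IsRegularOfDegree k) {M : ℕ} (hM : 2 * k ≤ M)
    {a : V → ℕ} (ha : ∀ w, a w ≤ M) {v : V} (h : candyRound G a v = M) : a v = M := by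
  have hfiring := hreg.card_filter_neighborFinset_le (k ≤ a ·) v
  have hav := ha v
  rcases le_or_gt k (a v) with hv | hv
  · have := candyRound_add_of_le hreg hv
    omega
  · have := candyRound_of_lt hreg hv
    omega

section Periodic

variable {b : V → ℕ} {p : ℕ}

theorem le_iterate_candyRound_of_adj (hreg : G.IsRegularOfDegree k)
    (hb : IsPeriodicPt (candyRound G) p b) (hp : 0 < p) {v u : V}
    (hv : ∀ t, k ≤ (candyRound G)^[t] b v) (huv : G.Adj v u) (t : ℕ) :
    k ≤ (candyRound G)^[t] b u := by
  set x : ℕ → ℕ := fun t => (candyRound G)^[t] b v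
  have step : ∀ t, x (t + 1) + k =
      x t + #{w ∈ G.neighborFinset v | k ≤ (candyRound G)^[t] b w} := fun t => by
    simp only [x, iterate_succ_apply', candyRound_add_of_le hreg (hv t)]
  have hanti : Antitone x := antitone_nat_of_succ_le fun t => by
    have := hreg.card_filter_neighborFinset_le (k ≤ (candyRound G)^[t] b ·) v
    have := step t
    omega
  have hconst : x (t + 1) = x t :=
    (hb.periodic_iterate.comp (· v)).eq_succ_of_antitone hp hanti t
  have hfull : #{w ∈ G.neighborFinset v | k ≤ (candyRound G)^[t] b w} =
      #(G.neighborFinset v) := by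
    have := step t
    rw [G.card_neighborFinset_eq_degree, hreg v]
    omega
  exact card_filter_eq_iff.mp hfull u ((G.mem_neighborFinset v u).mpr huv)

theorem iterate_candyRound_eq_of_forall_le (hreg : G.IsRegularOfDegree k)
    (hb : IsPeriodicPt (candyRound G) p b) (hp : 0 < p) {M : ℕ} (hM : 2 * k ≤ M)
    (hle : ∀ t w, (candyRound G)^[t] b w ≤ M) {t₀ : ℕ} {v : V}
    (ht₀ : (candyRound G)^[t₀] b v = M) (t : ℕ) : (candyRound G)^[t] b v = M :=
  (hb.periodic_iterate.comp (· v)).forall_eq_of_succ_eq hp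
    (fun s hs => eq_of_candyRound_apply_eq hreg hM (hle s)
      (by simpa only [comp_apply, iterate_succ_apply'] using hs))
    ht₀ t

theorem candyRound_eq_self_of_isPeriodicPt (hconn : G.Connected)
    (hreg : G.IsRegularOfDegree k) (hb : IsPeriodicPt (candyRound G) p b) (hp : 0 < p)
    (htot : (2 * k - 1) * Fintype.card V ≤ ∑ v, b v) : candyRound G b = b := by
  obtain ⟨⟨t₀, v₀⟩, -, hmax⟩ := exists_max_image (range p ×ˢ univ)
    (fun q => (candyRound G)^[q.1] b q.2) ⟨(0, hconn.nonempty.some), by simp [hp]⟩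
  have hle : ∀ t w, (candyRound G)^[t] b w ≤ (candyRound G)^[t₀] b v₀ := fun t w => by
    rw [← hb.iterate_mod_apply]
    exact hmax (t % p, w) (by simp [Nat.mod_lt _ hp])
  apply candyRound_eq_self hreg
  by_cases hM : 2 * k ≤ (candyRound G)^[t₀] b v₀
  · have hv₀ : ∀ t, k ≤ (candyRound G)^[t] b v₀ := fun t => by
      rw [iterate_candyRound_eq_of_forall_le hreg hb hp hM hle rfl t]
      omega
    exact fun w => hconn.forall_of_forall_adj (P := fun w => ∀ t, k ≤ (candyRound G)^[t] b w)
      (fun _ _ hvw hv => le_iterate_candyRound_of_adj hreg hb hp hv hvw) hv₀ w 0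
  · have hb_le : ∀ v ∈ univ, b v ≤ 2 * k - 1 := fun v _ => by
      have := hle 0 v
      simp only [iterate_zero, id_eq] at this
      omega
    have hb_eq := (sum_eq_sum_iff_of_le hb_le).mp <| le_antisymm (sum_le_sum hb_le) <| by
      simpa [mul_comm] using htot
    intro v
    rw [hb_eq v (mem_univ v)]
    omega

end Periodic

end Regular

theorem candy_passing_regular_stabilizes_general {V : Type*} [Fintype V] [DecidableEq V]
    (G : SimpleGraph V) [DecidableRel G.Adj] (hconn : G.Connected)
    (k : ℕ) (hreg : G.IsRegularOfDegree k) (a₀ : V → ℕ)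
    (htot : (2 * k - 1) * Fintype.card V ≤ ∑ v, a₀ v) :
    ∃ N : ℕ, ∀ n ≥ N, (candyRound G)^[n] a₀ = (candyRound G)^[N] a₀ := by
  obtain ⟨i, j, hij, hrepeat⟩ := (Set.finite_Iic _).exists_lt_map_eq_of_forall_mem
    (f := ((candyRound G)^[·] a₀)) fun n =>
      Set.mem_Iic.mpr (iterate_candyRound_apply_le hreg a₀ n)
  have hper : IsPeriodicPt (candyRound G) (j - i) ((candyRound G)^[i] a₀) := by
    rw [IsPeriodicPt, IsFixedPt, ← iterate_add_apply, Nat.sub_add_cancel hij.le, hrepeat]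
  have hfix := candyRound_eq_self_of_isPeriodicPt hconn hreg hper (by omega)
    (by rwa [sum_iterate_candyRound hreg])
  refine ⟨i, fun n hn => ?_⟩
  obtain ⟨d, rfl⟩ := Nat.exists_eq_add_of_le hn
  rw [add_comm, iterate_add_apply, iterate_fixed hfix]

theorem candy_passing_regular_stabilizes {V : Type*} [Fintype V] [DecidableEq V]
    (G : SimpleGraph V) [DecidableRel G.Adj] (hconn : G.Connected)
    (k : ℕ) (hk : 1 ≤ k) (hreg : G.IsRegularOfDegree k) (a₀ : V → ℕ)
    (htot : (2 * k - 1) * Fintype.card V ≤ ∑ v, a₀ v) :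
    ∃ N : ℕ, ∀ n ≥ N, (candyRound G)^[n] a₀ = (candyRound G)^[N] a₀ :=
  candy_passing_regular_stabilizes_general G hconn k hreg a₀ htot
end
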